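/- arXiv:2311.01668 — 2 statements merged into one kernel-verified Lean document; each statement's English description precedes it below -/
import Mathlib

section
/- Let H be a finitely generated subgroup of the free group F(a,b) whose Stallings graph S(H) is cyclically reduced and admits a surjective immersion onto the Stallings graph of ⟨a, b⁻¹ab⟩. Then in S(H), every vertex hyperlink is a subset of {a, a⁻¹, b} or of {a, a⁻¹, b⁻¹}, and consequently the number of a-labeled edges of S(H) is at least the number of b-labeled edges. -/
/-- An `X`-digraph: a finite directed graph with edges labeled by elements of `X`. -/
structure XDigraph (X : Type) where
  V : Type
  E : Type
  [fintypeV : Fintype V]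
  [fintypeE : Fintype E]
  [decV : DecidableEq V]
  [decE : DecidableEq E]
  init : E → V
  term : E → V
  lab : E → X

attribute [instance] XDigraph.fintypeV XDigraph.fintypeE XDigraph.decV XDigraph.decE

namespace XDigraph

variable {X : Type} (S : XDigraph X)

/-- A dart is an edge together with a direction (`true` = forward). -/
abbrev Dart := S.E × Bool

def dInit (d : S.Dart) : S.V := if d.2 then S.init d.1 else S.term d.1

def dTerm (d : S.Dart) : S.V := if d.2 then S.term d.1 else S.init d.1

/-- The label of a dart, as an element of `X ∪ X⁻¹` (encoded as `X × Bool`). -/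
def dLab (d : S.Dart) : X × Bool := (S.lab d.1, d.2)

def dRev (d : S.Dart) : S.Dart := (d.1, !d.2)

/-- The degree of a vertex: the number of darts pointing into it. -/
def degree (v : S.V) : ℕ := (Finset.univ.filter (fun d : S.Dart => S.dTerm d = v)).card

/-- The hyperlink of a vertex: the set of labels of darts pointing into it. -/
def hyperlink (v : S.V) : Set (X × Bool) := {p | ∃ d : S.Dart, S.dTerm d = v ∧ S.dLab d = p}

/-- `S` is folded if darts into the same vertex have distinct labels. -/
def Folded : Prop := ∀ v : S.V, Set.InjOn S.dLab {d : S.Dart | S.dTerm d = v}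

def Adj (u v : S.V) : Prop := ∃ d : S.Dart, S.dInit d = u ∧ S.dTerm d = v

def Connected : Prop := Nonempty S.V ∧ ∀ u v : S.V, Relation.EqvGen S.Adj u v

/-- A cyclically reduced graph has no leaves (vertices of degree one). -/
def NoLeaf : Prop := ∀ v : S.V, S.degree v ≠ 1

def IsPath (p : List S.Dart) : Prop := p.Chain' (fun d d' => S.dTerm d = S.dInit d')

/-- A path is immersed if no dart is immediately followed by its reverse. -/
def Immersed (p : List S.Dart) : Prop := p.Chain' (fun d d' => d' ≠ S.dRev d)

def IsLoopAt (p : List S.Dart) (v : S.V) : Prop :=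
  S.IsPath p ∧ ∀ h : p ≠ [], S.dInit (p.head h) = v ∧ S.dTerm (p.getLast h) = v

def pathLab (p : List S.Dart) : List (X × Bool) := p.map S.dLab

/-- Adjacency using only edges satisfying `P`. -/
def AdjOn (P : S.E → Prop) (u v : S.V) : Prop :=
  ∃ e : S.E, P e ∧ ((S.init e = u ∧ S.term e = v) ∨ (S.init e = v ∧ S.term e = u))

end XDigraph

section Defs

variable {X : Type} [DecidableEq X]

/-- A list of letters in `X ∪ X⁻¹` is freely reduced: no `x x⁻¹` or `x⁻¹ x` subword. -/
def ReducedList (l : List (X × Bool)) : Prop :=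
  List.Chain' (fun p q : X × Bool => p.1 ≠ q.1 ∨ p.2 = q.2) l

/-- `w` is cyclically reduced: every cyclic permutation of its reduced word is freely reduced. -/
def CyclRed (w : FreeGroup X) : Prop :=
  ∀ l : List (X × Bool), w.toWord.IsRotated l → ReducedList l

/-- `w` is readable as the label of an immersed loop of `S` based at `v`. -/
def Reads (S : XDigraph X) (v : S.V) (w : FreeGroup X) : Prop :=
  ∃ p : List S.Dart, S.Immersed p ∧ S.IsLoopAt p v ∧ S.pathLab p = w.toWord

/-- `S`, with basepoint `base`, is the Stallings graph of the subgroup `H`: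
a folded connected core graph whose immersed loops at `base` read exactly the elements of `H`. -/
def PRep (S : XDigraph X) (base : S.V) (H : Subgroup (FreeGroup X)) : Prop :=
  S.Folded ∧ S.Connected ∧ (∀ v : S.V, v ≠ base → 2 ≤ S.degree v) ∧
    ∀ w : FreeGroup X, w ∈ H ↔ Reads S base w

/-- `S` is the cyclically reduced Stallings graph representing the conjugacy class of `H`:
a folded, connected, cyclically reduced graph whose immersed loops read exactly the
cyclically reduced elements of `F(X)` that are conjugate into `H`. -/
def CRep (S : XDigraph X) (H : Subgroup (FreeGroup X)) : Prop :=
  S.Folded ∧ S.Connected ∧ S.NoLeaf ∧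
    ∀ w : FreeGroup X, CyclRed w →
      ((∃ v : S.V, Reads S v w) ↔ ∃ c : FreeGroup X, c * w * c⁻¹ ∈ H)

/-- The element of `F(X)` given by a single letter of `X ∪ X⁻¹`. -/
def iota (p : X × Bool) : FreeGroup X :=
  if p.2 then FreeGroup.of p.1 else (FreeGroup.of p.1)⁻¹

/-- `φ` is the type II Whitehead automorphism with cut `C` and multiplier `m`. -/
def IsWhiteheadII (φ : FreeGroup X ≃* FreeGroup X) (C : Finset (X × Bool)) (m : X × Bool) :
    Prop :=
  m ∈ C ∧ (m.1, !m.2) ∉ C ∧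
    ∀ x : X, φ (FreeGroup.of x) =
      if x = m.1 then FreeGroup.of x
      else (if (x, false) ∈ C then (iota m)⁻¹ else 1) * FreeGroup.of x *
           (if (x, true) ∈ C then iota m else 1)

/-- The number of edges of `S` labeled `x`. -/
def edgeCount (S : XDigraph X) (x : X) : ℕ :=
  (Finset.univ.filter (fun e : S.E => S.lab e = x)).card

/-- The hyperlink of a vertex, as a finset. -/
def hyperlinkF (S : XDigraph X) (v : S.V) : Finset (X × Bool) :=
  (Finset.univ.filter (fun d : S.Dart => S.dTerm d = v)).image S.dLab

/-- The capacity of the cut `C` in the Whitehead hypergraph of `S`: the number of vertices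
whose hyperlink meets both `C` and its complement. -/
def cap (S : XDigraph X) (C : Finset (X × Bool)) : ℕ :=
  (Finset.univ.filter
    (fun v : S.V => (hyperlinkF S v ∩ C).Nonempty ∧ (hyperlinkF S v \ C).Nonempty)).card

/-- The degree of the letter `m` in the Whitehead hypergraph of `S`: the number of vertices
whose hyperlink contains `m`. -/
def wdeg (S : XDigraph X) (m : X × Bool) : ℕ :=
  (Finset.univ.filter (fun v : S.V => m ∈ hyperlinkF S v)).card

/-- The number of connected components of the subgraph of `S` spanned by the edges
satisfying `P`, on the vertex set `{v | W v}`. -/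
noncomputable def componentsCount (S : XDigraph X) (P : S.E → Prop) (W : S.V → Prop) : ℕ :=
  Nat.card (Quotient (Setoid.comap (Subtype.val : {v : S.V // W v} → S.V)
    (Relation.EqvGen.setoid (S.AdjOn P))))

/-- The connected component of `u` in `S - e₀` has rank one (first Betti number one),
i.e. it has as many edges as vertices. -/
def ComponentRankOne (S : XDigraph X) (e₀ : S.E) (u : S.V) : Prop :=
  Nat.card {e : S.E // e ≠ e₀ ∧ Relation.EqvGen (S.AdjOn (· ≠ e₀)) u (S.init e)} =
    Nat.card {v : S.V // Relation.EqvGen (S.AdjOn (· ≠ e₀)) u v}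

/-- Property (L): `S` has a unique `v`-labeled edge `e₀`, and `S - e₀` has exactly two
connected components, at least one of which has rank one. -/
def PropertyL (S : XDigraph X) (v : X) : Prop :=
  ∃ e₀ : S.E, S.lab e₀ = v ∧ (∀ e : S.E, S.lab e = v → e = e₀) ∧
    componentsCount S (· ≠ e₀) (fun _ => True) = 2 ∧
    ∃ u : S.V, ComponentRankOne S e₀ u

/-- Property (S) for the partition `X = A ⊔ Aᶜ`: `S` is connected and cyclically reduced,
the `A`-edges form a bouquet of single-edge loops at one vertex, and the subgraph spanned
by the remaining edges is connected of rank one. -/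
def PropertyS (S : XDigraph X) (A : Set X) : Prop :=
  S.Connected ∧ S.NoLeaf ∧
    (∃ v₀ : S.V, ∀ e : S.E, S.lab e ∈ A → S.init e = v₀ ∧ S.term e = v₀) ∧
    Nat.card {e : S.E // S.lab e ∉ A} =
      Nat.card {w : S.V // ∃ e : S.E, S.lab e ∉ A ∧ (S.init e = w ∨ S.term e = w)} ∧
    ∀ u w : S.V, (∃ e : S.E, S.lab e ∉ A ∧ (S.init e = u ∨ S.term e = u)) →
      (∃ e : S.E, S.lab e ∉ A ∧ (S.init e = w ∨ S.term e = w)) →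
      Relation.EqvGen (S.AdjOn (fun e => S.lab e ∉ A)) u w

/-- An immersion of `X`-digraphs: a label- and orientation-preserving graph map which is
locally injective on links. -/
structure Immersion (S T : XDigraph X) where
  onV : S.V → T.V
  onE : S.E → T.E
  map_init : ∀ e : S.E, T.init (onE e) = onV (S.init e)
  map_term : ∀ e : S.E, T.term (onE e) = onV (S.term e)
  map_lab : ∀ e : S.E, T.lab (onE e) = S.lab e
  locInj : ∀ (v : S.V) (d d' : S.Dart), S.dTerm d = v → S.dTerm d' = v →
    ((onE d.1, d.2) : T.Dart) = (onE d'.1, d'.2) → d = d'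

/-- `K` is a proper free factor of `F(X)`: there is a nontrivial `L` with `F(X) = K ∗ L`. -/
def IsProperFreeFactor (K : Subgroup (FreeGroup X)) : Prop :=
  ∃ L : Subgroup (FreeGroup X), L ≠ ⊥ ∧
    Function.Bijective (Monoid.Coprod.lift K.subtype L.subtype)

end Defs


/-- The Stallings graph of `⟨a, b⁻¹ a b⟩ ≤ F(a, b)`, with `a = 0`, `b = 1`:
two vertices, an `a`-loop at each, and a single `b`-edge between them. -/
def T0 : XDigraph (Fin 2) where
  V := Bool
  E := Fin 3
  init := fun e => decide ((e : ℕ) = 1)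
  term := fun e => decide (1 ≤ (e : ℕ))
  lab := fun e => if (e : ℕ) = 2 then 1 else 0

/-
An immersion carries the darts arriving at a vertex `v` to darts arriving at its image with the
same labels, so the hyperlink of `v` lies in that of a vertex of `T0`, namely `{a, a⁻¹, b}` or
`{a, a⁻¹, b⁻¹}`. Since `S` is folded, at most one `b`-dart then arrives at each vertex, and since
`S` has no leaves, a vertex receiving a `b`-dart also receives an `a`-dart. Sending each `b`-dart
to its terminal vertex thus injects the `b`-darts into the terminal vertices of `a`-darts, and
there are twice as many darts as edges of each label.
-/

namespace XDigraph

variable {X : Type} {S : XDigraph X}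

theorem card_filter_dart (P : S.E → Prop) [DecidablePred P] :
    (Finset.univ.filter fun d : S.Dart => P d.1).card = 2 * (Finset.univ.filter P).card := by
  rw [← Finset.univ_product_univ, Finset.filter_product_left, Finset.card_product,
    Finset.card_univ, Fintype.card_bool, mul_comm]

theorem hyperlink_subset_of_immersion {T : XDigraph X} (F : Immersion S T) (v : S.V) :
    S.hyperlink v ⊆ T.hyperlink (F.onV v) := by
  rintro _ ⟨⟨e, b⟩, rfl, rfl⟩
  refine ⟨(F.onE e, b), ?_, by simp [dLab, F.map_lab]⟩
  cases b <;> simp [dTerm, F.map_init, F.map_term]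

theorem eq_of_dTerm_eq_of_lab_eq {x : X} (hfold : S.Folded)
    (horient : ∀ v, ¬((x, true) ∈ S.hyperlink v ∧ (x, false) ∈ S.hyperlink v))
    {d d' : S.Dart} (hd : S.lab d.1 = x) (hd' : S.lab d'.1 = x)
    (hterm : S.dTerm d = S.dTerm d') : d = d' := by
  have horient_eq : d.2 = d'.2 := by
    by_contra hne
    apply horient (S.dTerm d')
    have hmem : S.dLab d ∈ S.hyperlink (S.dTerm d') := ⟨d, hterm, rfl⟩
    have hmem' : S.dLab d' ∈ S.hyperlink (S.dTerm d') := ⟨d', rfl, rfl⟩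
    simp only [dLab, hd, hd'] at hmem hmem'
    cases h : d.2 <;> cases h' : d'.2 <;> simp_all
  exact hfold _ hterm rfl (Prod.ext (hd.trans hd'.symm) horient_eq)

theorem exists_dTerm_eq_lab_ne {x : X} (hfold : S.Folded) (hnoleaf : S.NoLeaf)
    (horient : ∀ v, ¬((x, true) ∈ S.hyperlink v ∧ (x, false) ∈ S.hyperlink v))
    {d : S.Dart} (hd : S.lab d.1 = x) :
    ∃ d' : S.Dart, S.lab d'.1 ≠ x ∧ S.dTerm d' = S.dTerm d := by
  have hdeg : 1 < S.degree (S.dTerm d) :=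
    lt_of_le_of_ne (Finset.card_pos.mpr ⟨d, by simp⟩) (hnoleaf _).symm
  obtain ⟨d', hd'mem, hne⟩ := Finset.exists_mem_ne hdeg d
  have hterm : S.dTerm d' = S.dTerm d := (Finset.mem_filter.mp hd'mem).2
  exact ⟨d', fun hd' => hne (eq_of_dTerm_eq_of_lab_eq hfold horient hd' hd hterm), hterm⟩

theorem edgeCount_le_card_lab_ne [DecidableEq X] {x : X} (hfold : S.Folded)
    (hnoleaf : S.NoLeaf)
    (horient : ∀ v, ¬((x, true) ∈ S.hyperlink v ∧ (x, false) ∈ S.hyperlink v)) :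
    edgeCount S x ≤ (Finset.univ.filter fun e : S.E => S.lab e ≠ x).card := by
  set others := Finset.univ.filter fun d : S.Dart => S.lab d.1 ≠ x
  suffices 2 * edgeCount S x ≤ 2 * (Finset.univ.filter fun e : S.E => S.lab e ≠ x).card by
    omega
  calc 2 * edgeCount S x = (Finset.univ.filter fun d : S.Dart => S.lab d.1 = x).card :=
        (card_filter_dart (S.lab · = x)).symm
    _ ≤ (others.image S.dTerm).card := by
        refine Finset.card_le_card_of_injOn S.dTerm (fun d hd => ?_) (fun d hd d' hd' h => ?_)
        · obtain ⟨d', hne, hterm⟩ :=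
            exists_dTerm_eq_lab_ne hfold hnoleaf horient (Finset.mem_filter.mp hd).2
          exact Finset.mem_image.mpr ⟨d', by simpa [others] using hne, hterm⟩
        · exact eq_of_dTerm_eq_of_lab_eq hfold horient (Finset.mem_filter.mp hd).2
            (Finset.mem_filter.mp hd').2 h
    _ ≤ others.card := Finset.card_image_le
    _ = 2 * (Finset.univ.filter fun e : S.E => S.lab e ≠ x).card :=
        card_filter_dart (S.lab · ≠ x)

end XDigraph

open XDigraph

theorem T0_hyperlink (v : Bool) :
    T0.hyperlink v = {((0 : Fin 2), true), ((0 : Fin 2), false), ((1 : Fin 2), v)} := by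
  ext ⟨x, b⟩
  fin_cases x <;> cases b <;> cases v <;> simp [hyperlink, T0, dTerm, dLab, Fin.exists_fin_succ]

theorem immersion_onto_loop_vertex_graph_hyperlinks_and_counts_general
    (H : Subgroup (FreeGroup (Fin 2))) (S : XDigraph (Fin 2))
    (hS : CRep S H) (F : Immersion S T0) :
    (∀ v : S.V,
        S.hyperlink v ⊆ {((0 : Fin 2), true), ((0 : Fin 2), false), ((1 : Fin 2), true)} ∨
        S.hyperlink v ⊆ {((0 : Fin 2), true), ((0 : Fin 2), false), ((1 : Fin 2), false)}) ∧
      edgeCount S 1 ≤ edgeCount S 0 := by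
  obtain ⟨hfold, -, hnoleaf, -⟩ := hS
  -- the ascription keeps the pair in `Fin 2 × Bool` rather than `Fin 2 × T0.V`
  have hsub (v : S.V) :
      S.hyperlink v ⊆
        {((0 : Fin 2), true), ((0 : Fin 2), false), (((1 : Fin 2), F.onV v) : Fin 2 × Bool)} :=
    T0_hyperlink (F.onV v) ▸ hyperlink_subset_of_immersion F v
  refine ⟨fun v => ?_, ?_⟩
  · cases h : F.onV v
    · exact Or.inr (h ▸ hsub v)
    · exact Or.inl (h ▸ hsub v)
  · have horient (v : S.V) :
        ¬(((1 : Fin 2), true) ∈ S.hyperlink v ∧ ((1 : Fin 2), false) ∈ S.hyperlink v) := by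
      rintro ⟨ht, hf⟩
      have hb {b : Bool} (h : ((1 : Fin 2), b) ∈ S.hyperlink v) : b = F.onV v := by
        simpa [Prod.ext_iff] using hsub v h
      exact Bool.noConfusion ((hb ht).trans (hb hf).symm)
    have hne_one : (Finset.univ.filter fun e : S.E => S.lab e ≠ 1) =
        Finset.univ.filter fun e => S.lab e = 0 := by
      ext e
      simp only [ne_eq, Finset.mem_filter, Finset.mem_univ, true_and]
      omega
    simpa [edgeCount, hne_one] using edgeCount_le_card_lab_ne hfold hnoleaf horient

/-- if the cyclically reduced Stallings graph `S` of `H ≤ F(a,b)` admits a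
surjective immersion onto the Stallings graph of `⟨a, b⁻¹ a b⟩`, then every vertex
hyperlink of `S` is contained in `{a, a⁻¹, b}` or `{a, a⁻¹, b⁻¹}`, and the number of
`a`-edges is at least the number of `b`-edges. -/
theorem immersion_onto_loop_vertex_graph_hyperlinks_and_counts
    (H : Subgroup (FreeGroup (Fin 2))) (S : XDigraph (Fin 2))
    (hS : CRep S H) (F : Immersion S T0)
    (hsurjV : Function.Surjective F.onV) (hsurjE : Function.Surjective F.onE) :
    (∀ v : S.V,
        S.hyperlink v ⊆ {((0 : Fin 2), true), ((0 : Fin 2), false), ((1 : Fin 2), true)} ∨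
        S.hyperlink v ⊆ {((0 : Fin 2), true), ((0 : Fin 2), false), ((1 : Fin 2), false)}) ∧
      edgeCount S 1 ≤ edgeCount S 0 :=
  immersion_onto_loop_vertex_graph_hyperlinks_and_counts_general H S hS F
end

section
/- Let S be a cyclically reduced X-digraph such that the subgraph of S consisting of edges labeled b (for a fixed b ∈ X) has the property that the sets of initial vertices and of terminal vertices of b-edges are disjoint, and the complement S - E_b(S) of the b-edges has k connected components, each of which is either a path or a cycle in the edges of X \ {b} and contains at least one edge. Then #E_{X\{b\}}(S) ≥ 2·#E_b(S) - k and #E_{X\{b\}}(S) ≥ k, hence #E_{X\{b\}}(S) ≥ #E_b(S). -/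
/-! The endpoint map on `b`-darts is injective: two `b`-darts with the same orientation and the
same endpoint are equal because `S` is folded, and two with opposite orientations cannot share
an endpoint by the disjointness hypothesis. For the same reason the second dart that
`degree ≥ 2` provides at such an endpoint is not a `b`-dart, so `2·#E_b(S)` is at most the number
of vertices of `S - E_b(S)`. That number is at most the number of edges plus the number `k` of
components, as for any graph, and `k ≤ #E_{X∖b}(S)` because every component contains an edge. -/

namespace SimpleGraph

variable {V : Type*} {G : SimpleGraph V}

lemma Reachable.exists_adj_dist_lt {u v : V} (h : G.Reachable u v) (hne : u ≠ v) :
    ∃ w, G.Adj u w ∧ G.dist w v < G.dist u v := by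
  obtain ⟨p, hp⟩ := h.exists_walk_length_eq_dist
  cases p with
  | nil => exact absurd rfl hne
  | cons hadj q =>
    rw [Walk.length_cons] at hp
    exact ⟨_, hadj, (dist_le q).trans_lt (by omega)⟩

theorem card_le_card_edgeSet_add_card_connectedComponent [Finite V] (G : SimpleGraph V) :
    Nat.card V ≤ Nat.card G.edgeSet + Nat.card G.ConnectedComponent := by
  classical
  let root (v : V) : V := (G.connectedComponentMk v).out
  have reachable_root (v : V) : G.Reachable v (root v) :=
    ConnectedComponent.exact (G.connectedComponentMk v).out_eq.symm
  have root_eq {v w : V} (h : G.Reachable v w) : root v = root w := by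
    simp only [root, ConnectedComponent.sound h]
  choose! next adj_next dist_next_lt using
    fun v (hv : v ≠ root v) => (reachable_root v).exists_adj_dist_lt hv
  -- A vertex other than its root goes to the first edge of a shortest path to the root.
  let f (v : V) : G.edgeSet ⊕ G.ConnectedComponent :=
    if hv : v = root v then .inr (G.connectedComponentMk v)
    else .inl ⟨s(v, next v), adj_next v hv⟩
  have hf : Function.Injective f := by
    intro v w hvw
    dsimp only [f] at hvw
    by_cases hv : v = root v <;> by_cases hw : w = root w
    · rw [dif_pos hv, dif_pos hw, Sum.inr.injEq] at hvw
      rw [hv, hw, root_eq (ConnectedComponent.exact hvw)]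
    · rw [dif_pos hv, dif_neg hw] at hvw
      cases hvw
    · rw [dif_neg hv, dif_pos hw] at hvw
      cases hvw
    · rw [dif_neg hv, dif_neg hw, Sum.inl.injEq] at hvw
      rcases Sym2.eq_iff.1 (congrArg Subtype.val hvw) with ⟨rfl, -⟩ | ⟨hvw, hwv⟩
      · rfl
      · -- then `v` and `w` are each one step closer to the common root than the other
        have hroot : root v = root w := hwv ▸ root_eq (adj_next v hv).reachable
        have hv_lt := dist_next_lt v hv
        have hw_lt := dist_next_lt w hw
        rw [hwv, hroot] at hv_lt
        rw [← hvw] at hw_lt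
        omega
  calc Nat.card V ≤ Nat.card (G.edgeSet ⊕ G.ConnectedComponent) :=
        Nat.card_le_card_of_injective f hf
    _ = _ := Nat.card_sum

end SimpleGraph

namespace XDigraph

section SpanGraph

variable {X : Type} (S : XDigraph X) (P : S.E → Prop)

def support : Set S.V := {v | ∃ e, P e ∧ (S.init e = v ∨ S.term e = v)}

/-- Loops and multiple edges of `S` are forgotten. -/
def spanGraph : SimpleGraph (S.support P) := SimpleGraph.fromRel fun u v => S.AdjOn P u v

variable {S P}

lemma init_mem_support {e : S.E} (he : P e) : S.init e ∈ S.support P := ⟨e, he, .inl rfl⟩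

lemma term_mem_support {e : S.E} (he : P e) : S.term e ∈ S.support P := ⟨e, he, .inr rfl⟩

lemma dTerm_mem_support {d : S.Dart} (hd : P d.1) : S.dTerm d ∈ S.support P := by
  rcases d with ⟨e, _ | _⟩
  · exact init_mem_support hd
  · exact term_mem_support hd

lemma adjOn_comm {u v : S.V} : S.AdjOn P u v ↔ S.AdjOn P v u := by
  simp only [AdjOn, or_comm]

lemma AdjOn.mem_support {u v : S.V} (h : S.AdjOn P u v) :
    u ∈ S.support P ∧ v ∈ S.support P := by
  obtain ⟨e, he, ⟨rfl, rfl⟩ | ⟨rfl, rfl⟩⟩ := h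
  · exact ⟨init_mem_support he, term_mem_support he⟩
  · exact ⟨term_mem_support he, init_mem_support he⟩

lemma spanGraph_adj {u v : S.support P} :
    (S.spanGraph P).Adj u v ↔ u ≠ v ∧ S.AdjOn P u v := by
  rw [spanGraph, SimpleGraph.fromRel_adj, adjOn_comm (u := (v : S.V)), or_self]

lemma AdjOn.reachable_spanGraph {u v : S.support P} (h : S.AdjOn P u v) :
    (S.spanGraph P).Reachable u v := by
  by_cases huv : u = v
  · exact huv ▸ .rfl
  · exact SimpleGraph.Adj.reachable (spanGraph_adj.2 ⟨huv, h⟩)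

lemma reachable_spanGraph_iff {u v : S.support P} :
    (S.spanGraph P).Reachable u v ↔ Relation.EqvGen (S.AdjOn P) u v := by
  constructor
  · rw [SimpleGraph.reachable_iff_reflTransGen]
    intro h
    induction h with
    | refl => exact .refl _
    | tail _ hadj ih => exact ih.trans _ _ _ (.rel _ _ (spanGraph_adj.1 hadj).2)
  · have : Std.Symm (S.AdjOn P) := ⟨fun _ _ => adjOn_comm.1⟩
    rw [Relation.EqvGen.eqvGen_eq_reflTransGen]
    obtain ⟨v, hv⟩ := v
    intro (h : Relation.ReflTransGen (S.AdjOn P) u v)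
    induction h with
    | refl => exact .rfl
    | tail _ hadj ih => exact (ih hadj.mem_support.1).trans hadj.reachable_spanGraph

lemma componentsCount_eq_card_connectedComponent :
    componentsCount S P (fun v => ∃ e, P e ∧ (S.init e = v ∨ S.term e = v)) =
      Nat.card (S.spanGraph P).ConnectedComponent :=
  Nat.card_congr (Quot.congrRight fun _ _ => reachable_spanGraph_iff.symm)

lemma card_edgeSet_spanGraph_le : Nat.card (S.spanGraph P).edgeSet ≤ Nat.card {e // P e} := by
  let ends (e : {e // P e}) : Sym2 (S.support P) :=
    s(⟨S.init e, init_mem_support e.2⟩, ⟨S.term e, term_mem_support e.2⟩)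
  have hsub : (S.spanGraph P).edgeSet ⊆ Set.range ends := by
    refine Sym2.ind fun u v huv => ?_
    obtain ⟨-, e, he, ⟨hu, hv⟩ | ⟨hv, hu⟩⟩ := spanGraph_adj.1 huv <;>
      exact ⟨⟨e, he⟩, by simp [ends, ← Subtype.coe_inj, hu, hv]⟩
  calc Nat.card (S.spanGraph P).edgeSet ≤ Nat.card (Set.range ends) :=
        Nat.card_mono (Set.toFinite _) hsub
    _ ≤ Nat.card {e // P e} := Finite.card_range_le ends

lemma card_connectedComponent_spanGraph_le :
    Nat.card (S.spanGraph P).ConnectedComponent ≤ Nat.card {e // P e} := by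
  refine Nat.card_le_card_of_surjective
    (fun e => (S.spanGraph P).connectedComponentMk ⟨S.init e, init_mem_support e.2⟩) ?_
  refine SimpleGraph.ConnectedComponent.ind ?_
  rintro ⟨v, e, he, hv | hv⟩
  · exact ⟨⟨e, he⟩, by simp only [hv]⟩
  · refine ⟨⟨e, he⟩, SimpleGraph.ConnectedComponent.sound (AdjOn.reachable_spanGraph ?_)⟩
    exact ⟨e, he, .inl ⟨rfl, hv⟩⟩

end SpanGraph

variable {X : Type} {S : XDigraph X} {b : X}

lemma injOn_dTerm_of_lab_eq (hfold : S.Folded)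
    (hdisj : ∀ e e' : S.E, S.lab e = b → S.lab e' = b → S.init e ≠ S.term e') :
    Set.InjOn S.dTerm {d | S.lab d.1 = b} := by
  rintro ⟨e, s⟩ (he : S.lab e = b) ⟨e', s'⟩ (he' : S.lab e' = b) h
  by_cases hs : s = s'
  · exact hfold _ rfl h.symm (by simp [dLab, he, he', hs])
  · obtain ⟨rfl, rfl⟩ | ⟨rfl, rfl⟩ : s = false ∧ s' = true ∨ s = true ∧ s' = false := by
      cases s <;> cases s' <;> simp at hs ⊢
    · exact (hdisj e e' he he' h).elim
    · exact (hdisj e' e he' he h.symm).elim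

lemma dTerm_mem_support_of_lab_eq (hfold : S.Folded) (hcyc : ∀ v : S.V, 2 ≤ S.degree v)
    (hdisj : ∀ e e' : S.E, S.lab e = b → S.lab e' = b → S.init e ≠ S.term e')
    {d : S.Dart} (hd : S.lab d.1 = b) : S.dTerm d ∈ S.support (S.lab · ≠ b) := by
  obtain ⟨d', hd', hne⟩ := Finset.exists_mem_ne (hcyc (S.dTerm d)) d
  rw [Finset.mem_filter] at hd'
  have hd'b : S.lab d'.1 ≠ b := fun hb => hne (injOn_dTerm_of_lab_eq hfold hdisj hb hd hd'.2)
  exact hd'.2 ▸ dTerm_mem_support hd'b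

lemma two_mul_edgeCount_le_card_support [DecidableEq X] (hfold : S.Folded)
    (hcyc : ∀ v : S.V, 2 ≤ S.degree v)
    (hdisj : ∀ e e' : S.E, S.lab e = b → S.lab e' = b → S.init e ≠ S.term e') :
    2 * edgeCount S b ≤ Nat.card (S.support (S.lab · ≠ b)) := by
  let f (d : {e // S.lab e = b} × Bool) : S.support (S.lab · ≠ b) :=
    ⟨S.dTerm (d.1, d.2), dTerm_mem_support_of_lab_eq hfold hcyc hdisj d.1.2⟩
  have hf : Function.Injective f := fun d d' h => by
    have := injOn_dTerm_of_lab_eq hfold hdisj d.1.2 d'.1.2 (congrArg Subtype.val h)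
    simp only [Prod.mk.injEq] at this
    exact Prod.ext (Subtype.ext this.1) this.2
  calc 2 * edgeCount S b = Nat.card ({e // S.lab e = b} × Bool) := by
        rw [Nat.card_prod, Nat.card_eq_fintype_card, Fintype.card_subtype,
          Nat.card_eq_fintype_card (α := Bool), Fintype.card_bool, edgeCount, mul_comm]
    _ ≤ _ := Nat.card_le_card_of_injective f hf

end XDigraph

theorem path_cycle_complement_edge_count_bounds_general
    {X : Type} [DecidableEq X] (S : XDigraph X) (b : X)
    (hfold : S.Folded) (hcyc : ∀ v : S.V, 2 ≤ S.degree v)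
    (hdisj : ∀ e e' : S.E, S.lab e = b → S.lab e' = b → S.init e ≠ S.term e') :
    2 * edgeCount S b ≤
        (Finset.univ.filter (fun e : S.E => S.lab e ≠ b)).card +
          componentsCount S (fun e => S.lab e ≠ b)
            (fun v => ∃ e : S.E, S.lab e ≠ b ∧ (S.init e = v ∨ S.term e = v)) ∧
      componentsCount S (fun e => S.lab e ≠ b)
          (fun v => ∃ e : S.E, S.lab e ≠ b ∧ (S.init e = v ∨ S.term e = v)) ≤
        (Finset.univ.filter (fun e : S.E => S.lab e ≠ b)).card ∧
      edgeCount S b ≤ (Finset.univ.filter (fun e : S.E => S.lab e ≠ b)).card := by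
  rw [XDigraph.componentsCount_eq_card_connectedComponent, ← Fintype.card_subtype,
    ← Nat.card_eq_fintype_card]
  set G := S.spanGraph (S.lab · ≠ b)
  have hV : 2 * edgeCount S b ≤ Nat.card {e // S.lab e ≠ b} + Nat.card G.ConnectedComponent :=
    calc 2 * edgeCount S b ≤ Nat.card (S.support (S.lab · ≠ b)) :=
          XDigraph.two_mul_edgeCount_le_card_support hfold hcyc hdisj
      _ ≤ Nat.card G.edgeSet + Nat.card G.ConnectedComponent :=
          G.card_le_card_edgeSet_add_card_connectedComponent
      _ ≤ _ := Nat.add_le_add_right XDigraph.card_edgeSet_spanGraph_le _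
  have hk : Nat.card G.ConnectedComponent ≤ Nat.card {e // S.lab e ≠ b} :=
    XDigraph.card_connectedComponent_spanGraph_le
  exact ⟨hV, hk, by omega⟩

/-- let `S` be a folded cyclically reduced `X`-digraph (every vertex has
degree at least two) in which the initial and terminal vertices of `b`-edges are disjoint
and the complement of the `b`-edges has `k` components, each a path or a cycle (every
vertex meets at most two non-`b` darts). Then `#E_{X\b} + k ≥ 2·#E_b`, `#E_{X\b} ≥ k`,
and hence `#E_{X\b} ≥ #E_b`. -/
theorem path_cycle_complement_edge_count_bounds
    {X : Type} [DecidableEq X] (S : XDigraph X) (b : X)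
    (hfold : S.Folded) (hcyc : ∀ v : S.V, 2 ≤ S.degree v)
    (hdisj : ∀ e e' : S.E, S.lab e = b → S.lab e' = b → S.init e ≠ S.term e')
    (hpathcyc : ∀ v : S.V,
      (Finset.univ.filter (fun d : S.Dart => S.lab d.1 ≠ b ∧ S.dTerm d = v)).card ≤ 2) :
    2 * edgeCount S b ≤
        (Finset.univ.filter (fun e : S.E => S.lab e ≠ b)).card +
          componentsCount S (fun e => S.lab e ≠ b)
            (fun v => ∃ e : S.E, S.lab e ≠ b ∧ (S.init e = v ∨ S.term e = v)) ∧
      componentsCount S (fun e => S.lab e ≠ b)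
          (fun v => ∃ e : S.E, S.lab e ≠ b ∧ (S.init e = v ∨ S.term e = v)) ≤
        (Finset.univ.filter (fun e : S.E => S.lab e ≠ b)).card ∧
      edgeCount S b ≤ (Finset.univ.filter (fun e : S.E => S.lab e ≠ b)).card :=
  path_cycle_complement_edge_count_bounds_general S b hfold hcyc hdisj
end
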